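/- Every continuous fixed point W of the renormalization operator 𝓡 on the Thue-Morse subshift 𝕂 with summable variations (Σ_k Var_k(W) < ∞) equals U_c with c = W(ρ₀), where U_c is the potential taking value c on [01], −c on [10], and 0 on [00] ∪ [11]. -/

import Mathlib

/-!
Iterating the fixed-point equation `n` times writes `W x` as the Birkhoff sum `S_{2ⁿ} W (Hⁿ x)`.
If `x, y ∈ 𝕂` share their first two symbols, then `Hⁿ x` and `Hⁿ y` share `2ⁿ⁺¹`, so the two
Birkhoff sums differ by at most `∑_{k > 2ⁿ} Var_k W → 0`: `W` is constant on 2-cylinders of `𝕂`.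
Since `ρ₀ = 0110100110010110…`, the points `ρ₀, σρ₀, σ²ρ₀, σ⁵ρ₀` lie in `[01], [11], [10], [00]`,
and the fixed-point equation at `ρ₀`, `σ²ρ₀`, `σ⁵ρ₀` forces the values `0, 0, -W ρ₀` on
`[11], [00], [10]`.
-/

open Filter Topology MeasureTheory

/-- The left shift on the full 2-shift `Σ = {0,1}^ℕ`. -/
def shift (x : ℕ → Bool) : ℕ → Bool := fun n => x (n + 1)

/-- The Thue–Morse substitution `H : 0 → 01, 1 → 10`, acting on sequences. -/
def subH (x : ℕ → Bool) : ℕ → Bool :=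
  fun n => if n % 2 = 0 then x (n / 2) else !x (n / 2)

/-- The Thue–Morse sequence: `tm n` is the parity of the number of 1s in
the binary expansion of `n`. -/
def tm (n : ℕ) : Bool := (Nat.digits 2 n).count 1 % 2 == 1

/-- The fixed point of `subH` starting with 0. -/
def rho0 : ℕ → Bool := tm

/-- The fixed point of `subH` starting with 1. -/
def rho1 : ℕ → Bool := fun n => !tm n

/-- `rhoB b` is the fixed point of `subH` starting with digit `b`. -/
def rhoB : Bool → ℕ → Bool
  | false => rho0
  | true => rho1

/-- The digit-flipping involution. -/
def flipSeq (x : ℕ → Bool) : ℕ → Bool := fun n => !x n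

/-- Prepend a digit to a sequence. -/
def consTM (a : Bool) (x : ℕ → Bool) : ℕ → Bool
  | 0 => a
  | n + 1 => x n

/-- The Thue–Morse subshift: the closure of the shift orbit of `rho0`. -/
def TMK : Set (ℕ → Bool) := closure {y | ∃ n, y = shift^[n] rho0}

/-- The renormalization operator `𝓡V = V ∘ σ ∘ H + V ∘ H`. -/
def RenOp (V : (ℕ → Bool) → ℝ) : (ℕ → Bool) → ℝ :=
  fun x => V (shift (subH x)) + V (subH x)

/-- The Birkhoff sum `S_k V = ∑_{i<k} V ∘ σⁱ`. -/
def birkhoff (V : (ℕ → Bool) → ℝ) (k : ℕ) (x : ℕ → Bool) : ℝ :=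
  ∑ i ∈ Finset.range k, V (shift^[i] x)

/-- The potential `U_c`: value `c` on `[01]`, `-c` on `[10]`, `0` on `[00] ∪ [11]`. -/
def Upot (c : ℝ) (x : ℕ → Bool) : ℝ :=
  if x 0 = false ∧ x 1 = true then c
  else if x 0 = true ∧ x 1 = false then -c else 0

/-- The sliding block code `π(x)_k = 1` iff `x_k ≠ x_{k+1}`. -/
def piTM (x : ℕ → Bool) : ℕ → Bool := fun n => x n != x (n + 1)

/-- The Feigenbaum substitution `0 → 11, 1 → 10`, acting on sequences. -/
def subHfeig (x : ℕ → Bool) : ℕ → Bool :=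
  fun n => if n % 2 = 0 then true else !x (n / 2)

lemma shift_iterate_apply (x : ℕ → Bool) (i j : ℕ) : shift^[i] x j = x (j + i) := by
  induction i generalizing j with
  | zero => rfl
  | succ i ih =>
    rw [Function.iterate_succ_apply', shift, ih, Nat.add_right_comm, Nat.add_assoc]

lemma subH_two_mul (x : ℕ → Bool) (m : ℕ) : subH x (2 * m) = x m := by
  simp [subH]

lemma subH_two_mul_add_one (x : ℕ → Bool) (m : ℕ) : subH x (2 * m + 1) = !x m := by
  simp [subH, Nat.mul_add_div]

lemma tm_two_mul (m : ℕ) : tm (2 * m) = tm m := by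
  rcases Nat.eq_zero_or_pos m with rfl | hm
  · rfl
  · simp [tm, Nat.digits_def' (b := 2) (by norm_num) (by omega : 0 < 2 * m)]

lemma tm_two_mul_add_one (m : ℕ) : tm (2 * m + 1) = !tm m := by
  rw [tm, Nat.digits_def' (b := 2) (by norm_num) (by omega), Nat.mul_add_mod,
    Nat.mul_add_div two_pos]
  simp only [tm, List.count_cons]
  rcases Nat.mod_two_eq_zero_or_one ((Nat.digits 2 m).count 1) with h | h <;>
    simp [Nat.add_mod, h]

lemma subH_rho0 : subH rho0 = rho0 := by
  funext n
  obtain ⟨m, rfl | rfl⟩ := Nat.even_or_odd' n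
  · rw [subH_two_mul]; exact (tm_two_mul m).symm
  · rw [subH_two_mul_add_one]; exact (tm_two_mul_add_one m).symm

lemma subH_shift (x : ℕ → Bool) : subH (shift x) = shift^[2] (subH x) := by
  funext n
  rw [shift_iterate_apply]
  obtain ⟨m, rfl | rfl⟩ := Nat.even_or_odd' n
  · rw [show 2 * m + 2 = 2 * (m + 1) by ring, subH_two_mul, subH_two_mul]; rfl
  · rw [show 2 * m + 1 + 2 = 2 * (m + 1) + 1 by ring, subH_two_mul_add_one,
      subH_two_mul_add_one]; rfl

lemma subH_shift_iterate (i : ℕ) (x : ℕ → Bool) :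
    subH (shift^[i] x) = shift^[2 * i] (subH x) := by
  induction i generalizing x with
  | zero => rfl
  | succ i ih =>
    rw [Function.iterate_succ_apply, ih, subH_shift, ← Function.iterate_add_apply, mul_add_one]

lemma subH_shift_iterate_rho0 (i : ℕ) : subH (shift^[i] rho0) = shift^[2 * i] rho0 := by
  rw [subH_shift_iterate, subH_rho0]

lemma subH_apply_eq_of_forall_lt {x y : ℕ → Bool} {k : ℕ} (h : ∀ j < k, x j = y j) :
    ∀ j < 2 * k, subH x j = subH y j := fun j hj => by
  simp only [subH, h (j / 2) (by omega)]

lemma subH_iterate_apply_eq_of_forall_lt {x y : ℕ → Bool} {k : ℕ} (h : ∀ j < k, x j = y j)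
    (n : ℕ) : ∀ j < 2 ^ n * k, subH^[n] x j = subH^[n] y j := by
  induction n with
  | zero => simpa using h
  | succ n ih =>
    simp only [Function.iterate_succ_apply', pow_succ', mul_assoc]
    exact subH_apply_eq_of_forall_lt ih

lemma continuous_shift : Continuous shift :=
  continuous_pi fun n => continuous_apply (n + 1)

lemma continuous_subH : Continuous subH := by
  refine continuous_pi fun n => ?_
  by_cases h : n % 2 = 0
  · simpa [subH, h] using continuous_apply (n / 2)
  · simpa [subH, h, Function.comp_def] using
      (continuous_of_discreteTopology (f := not)).comp (continuous_apply (n / 2))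

lemma shift_iterate_rho0_mem_TMK (i : ℕ) : shift^[i] rho0 ∈ TMK :=
  subset_closure ⟨i, rfl⟩

lemma mapsTo_shift_TMK : Set.MapsTo shift TMK TMK := fun _ hx =>
  map_mem_closure continuous_shift hx fun _ ⟨n, hn⟩ =>
    ⟨n + 1, by rw [hn, Function.iterate_succ_apply']⟩

lemma mapsTo_subH_TMK : Set.MapsTo subH TMK TMK := fun _ hx =>
  map_mem_closure continuous_subH hx fun _ ⟨n, hn⟩ =>
    ⟨2 * n, by rw [hn, subH_shift_iterate_rho0]⟩

lemma birkhoff_two_mul_subH (V : (ℕ → Bool) → ℝ) (m : ℕ) (x : ℕ → Bool) :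
    birkhoff V (2 * m) (subH x) = birkhoff (RenOp V) m x := by
  induction m with
  | zero => simp [birkhoff]
  | succ m ih =>
    simp only [birkhoff] at ih ⊢
    rw [mul_add_one, Finset.sum_range_succ, Finset.sum_range_succ, ih, Finset.sum_range_succ,
      RenOp, subH_shift_iterate, Function.iterate_succ_apply']
    ring

section Potential

variable {W : (ℕ → Bool) → ℝ} {v : ℕ → ℝ}

lemma eq_birkhoff_subH_iterate (hfix : ∀ x ∈ TMK, W x = W (subH x) + W (shift (subH x)))
    (n : ℕ) {x : ℕ → Bool} (hx : x ∈ TMK) :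
    W x = birkhoff W (2 ^ n) (subH^[n] x) := by
  induction n with
  | zero => simp [birkhoff]
  | succ n ih =>
    rw [ih, pow_succ', Function.iterate_succ_apply', birkhoff_two_mul_subH]
    refine Finset.sum_congr rfl fun i _ => ?_
    rw [hfix _ ((mapsTo_shift_TMK.iterate i) ((mapsTo_subH_TMK.iterate n) hx)), RenOp, add_comm]

lemma apply_shift_iterate_rho0 (hfix : ∀ x ∈ TMK, W x = W (subH x) + W (shift (subH x)))
    (i : ℕ) :
    W (shift^[i] rho0) = W (shift^[2 * i] rho0) + W (shift^[2 * i + 1] rho0) := by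
  rw [hfix _ (shift_iterate_rho0_mem_TMK i), subH_shift_iterate_rho0,
    Function.iterate_succ_apply']

lemma abs_birkhoff_sub_le
    (hvar : ∀ k : ℕ, ∀ x ∈ TMK, ∀ y ∈ TMK, (∀ j < k, x j = y j) → |W x - W y| ≤ v k)
    {m k : ℕ} {x y : ℕ → Bool} (hx : x ∈ TMK) (hy : y ∈ TMK) (h : ∀ j < m + k, x j = y j) :
    |birkhoff W m x - birkhoff W m y| ≤ ∑ i ∈ Finset.range m, v (i + (k + 1)) := by
  rw [birkhoff, birkhoff, ← Finset.sum_sub_distrib]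
  calc _ ≤ ∑ i ∈ Finset.range m, |W (shift^[i] x) - W (shift^[i] y)| :=
        Finset.abs_sum_le_sum_abs _ _
    _ ≤ ∑ i ∈ Finset.range m, v (m - 1 - i + (k + 1)) := Finset.sum_le_sum fun i hi => by
        rw [Finset.mem_range] at hi
        refine (hvar (m + k - i) _ ((mapsTo_shift_TMK.iterate i) hx) _
          ((mapsTo_shift_TMK.iterate i) hy) fun j hj => ?_).trans_eq (by congr 1; omega)
        rw [shift_iterate_apply, shift_iterate_apply]
        exact h _ (by omega)
    _ = _ := Finset.sum_range_reflect (fun i => v (i + (k + 1))) m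

theorem apply_eq_apply_of_forall_lt_two
    (hfix : ∀ x ∈ TMK, W x = W (subH x) + W (shift (subH x))) (hv : Summable v)
    (hvar : ∀ k : ℕ, ∀ x ∈ TMK, ∀ y ∈ TMK, (∀ j < k, x j = y j) → |W x - W y| ≤ v k)
    {x y : ℕ → Bool} (hx : x ∈ TMK) (hy : y ∈ TMK) (h : ∀ j < 2, x j = y j) : W x = W y := by
  have hv_nonneg (k : ℕ) : 0 ≤ v k := (abs_nonneg _).trans (hvar k x hx x hx fun _ _ => rfl)
  have hbound : ∀ n : ℕ, |W x - W y| ≤ ∑' i, v (i + (2 ^ n + 1)) := fun n => by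
    rw [eq_birkhoff_subH_iterate hfix n hx, eq_birkhoff_subH_iterate hfix n hy]
    have hagree : ∀ j < 2 ^ n + 2 ^ n, subH^[n] x j = subH^[n] y j := fun j hj =>
      subH_iterate_apply_eq_of_forall_lt h n j (by omega)
    calc _ ≤ ∑ i ∈ Finset.range (2 ^ n), v (i + (2 ^ n + 1)) :=
          abs_birkhoff_sub_le hvar ((mapsTo_subH_TMK.iterate n) hx)
            ((mapsTo_subH_TMK.iterate n) hy) hagree
      _ ≤ ∑' i, v (i + (2 ^ n + 1)) :=
          ((summable_nat_add_iff _).2 hv).sum_le_tsum _ fun i _ => hv_nonneg _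
  have htail : Tendsto (fun n : ℕ => ∑' i, v (i + (2 ^ n + 1))) atTop (𝓝 0) :=
    (tendsto_sum_nat_add v).comp
      ((tendsto_add_atTop_nat 1).comp (tendsto_pow_atTop_atTop_of_one_lt (one_lt_two (α := ℕ))))
  have := ge_of_tendsto' htail hbound
  rwa [abs_nonpos_iff, sub_eq_zero] at this

lemma apply_eq_apply_shift_iterate_rho0
    (hfix : ∀ x ∈ TMK, W x = W (subH x) + W (shift (subH x))) (hv : Summable v)
    (hvar : ∀ k : ℕ, ∀ x ∈ TMK, ∀ y ∈ TMK, (∀ j < k, x j = y j) → |W x - W y| ≤ v k)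
    {x : ℕ → Bool} (hx : x ∈ TMK) {i : ℕ} (h0 : x 0 = tm i) (h1 : x 1 = tm (i + 1)) :
    W x = W (shift^[i] rho0) :=
  apply_eq_apply_of_forall_lt_two hfix hv hvar hx (shift_iterate_rho0_mem_TMK i) fun j hj => by
    interval_cases j <;> simp [shift_iterate_apply, rho0, h0, h1, add_comm]

end Potential

theorem stmt11_general (W : (ℕ → Bool) → ℝ)
    (hfix : ∀ x ∈ TMK, W x = W (subH x) + W (shift (subH x)))
    (v : ℕ → ℝ) (hv : Summable v)
    (hvar : ∀ k : ℕ, ∀ x ∈ TMK, ∀ y ∈ TMK, (∀ j < k, x j = y j) → |W x - W y| ≤ v k) :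
    ∀ x ∈ TMK, W x = Upot (W rho0) x := by
  have hcyl (i : ℕ) {x : ℕ → Bool} (hx : x ∈ TMK) :=
    apply_eq_apply_shift_iterate_rho0 hfix hv hvar hx (i := i)
  have hshift (i j : ℕ) (h0 : tm i = tm j) (h1 : tm (i + 1) = tm (j + 1)) :
      W (shift^[i] rho0) = W (shift^[j] rho0) :=
    hcyl j (shift_iterate_rho0_mem_TMK i) (by simpa [shift_iterate_apply, rho0])
      (by simpa [shift_iterate_apply, rho0, add_comm])
  have h11 : W (shift^[1] rho0) = 0 := by
    have := apply_shift_iterate_rho0 hfix 0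
    simp only [Function.iterate_zero_apply, mul_zero, zero_add] at this
    linarith
  have h00 : W (shift^[5] rho0) = 0 := by
    have := apply_shift_iterate_rho0 hfix 2
    rw [hshift 4 2 (by decide) (by decide)] at this
    linarith
  have h10 : W (shift^[2] rho0) = -W rho0 := by
    have := apply_shift_iterate_rho0 hfix 5
    rw [h00, hshift 10 0 (by decide) (by decide), hshift 11 2 (by decide) (by decide)] at this
    simp only [Function.iterate_zero_apply] at this
    linarith
  intro x hx
  rcases hx0 : x 0 <;> rcases hx1 : x 1
  · rw [hcyl 5 hx (by rw [hx0]; decide) (by rw [hx1]; decide), h00]; simp [Upot, hx0, hx1]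
  · rw [hcyl 0 hx (by rw [hx0]; decide) (by rw [hx1]; decide)]; simp [Upot, hx0, hx1]
  · rw [hcyl 2 hx (by rw [hx0]; decide) (by rw [hx1]; decide), h10]; simp [Upot, hx0, hx1]
  · rw [hcyl 1 hx (by rw [hx0]; decide) (by rw [hx1]; decide), h11]; simp [Upot, hx0, hx1]

/-- every continuous fixed point of `𝓡` on `𝕂` with summable
variations coincides on `𝕂` with `U_c`, where `c = W(ρ₀)`. -/
theorem stmt11 (W : (ℕ → Bool) → ℝ) (hW : ContinuousOn W TMK)
    (hfix : ∀ x ∈ TMK, W x = W (subH x) + W (shift (subH x)))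
    (v : ℕ → ℝ) (hv : Summable v)
    (hvar : ∀ k : ℕ, ∀ x ∈ TMK, ∀ y ∈ TMK, (∀ j < k, x j = y j) → |W x - W y| ≤ v k) :
    ∀ x ∈ TMK, W x = Upot (W rho0) x :=
  stmt11_general W hfix v hv hvar
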